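/- arXiv:1206.6377 — 2 statements merged into one kernel-verified Lean document; each statement's English description precedes it below -/
import Mathlib

section
/- For every natural number n ≥ 1 and every k with 0 ≤ k ≤ n, if Y is a binomial random variable with parameters n and 1/n (so E[Y] = 1), then P(Y ≥ k) ≤ e / k!. -/
/-!
Bounding `(1 - p) ^ (n - j)` by `1` and `n.choose j` by `n ^ j / j!` dominates the binomial
probabilities by the Poisson weights `(n p) ^ j / j!`. Since `(k + m)! ≥ k! m!`, the tail of the
exponential series from `k` on is at most `x ^ k / k!` times `exp x`; for `p = 1 / n` the mean
`n p` is at most `1`.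
-/

open Finset Nat

lemma pow_add_div_factorial_le {x : ℝ} (hx : 0 ≤ x) (k m : ℕ) :
    x ^ (k + m) / (k + m)! ≤ x ^ k / k ! * (x ^ m / m !) := by
  rw [_root_.div_mul_div_comm, ← pow_add]
  gcongr
  exact_mod_cast Nat.le_of_dvd (factorial_pos _) (factorial_mul_factorial_dvd_factorial_add k m)

lemma sum_Icc_pow_div_factorial_le {x : ℝ} (hx : 0 ≤ x) (k n : ℕ) :
    ∑ j ∈ Icc k n, x ^ j / j ! ≤ x ^ k / k ! * Real.exp x := by
  have hIcc : Icc k n = Ico k (n + 1) := rfl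
  rw [hIcc, sum_Ico_eq_sum_range]
  calc ∑ m ∈ range (n + 1 - k), x ^ (k + m) / (k + m)!
      ≤ ∑ m ∈ range (n + 1 - k), x ^ k / k ! * (x ^ m / m !) :=
        sum_le_sum fun m _ => pow_add_div_factorial_le hx k m
    _ = x ^ k / k ! * ∑ m ∈ range (n + 1 - k), x ^ m / m ! := (mul_sum ..).symm
    _ ≤ x ^ k / k ! * Real.exp x := by
        gcongr
        exact Real.sum_le_exp_of_nonneg hx _

lemma choose_mul_pow_mul_pow_le {p : ℝ} (hp₀ : 0 ≤ p) (hp₁ : p ≤ 1) (n j : ℕ) :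
    (n.choose j : ℝ) * p ^ j * (1 - p) ^ (n - j) ≤ (n * p) ^ j / j ! := by
  calc (n.choose j : ℝ) * p ^ j * (1 - p) ^ (n - j)
      ≤ n.choose j * p ^ j :=
        mul_le_of_le_one_right (by positivity) (pow_le_one₀ (by linarith) (by linarith))
    _ ≤ n ^ j / j ! * p ^ j := by
        gcongr
        exact choose_le_pow_div j n
    _ = (n * p) ^ j / j ! := by ring

lemma sum_Icc_choose_mul_pow_mul_pow_le {p : ℝ} (hp₀ : 0 ≤ p) (hp₁ : p ≤ 1) (k n : ℕ) :
    ∑ j ∈ Icc k n, (n.choose j : ℝ) * p ^ j * (1 - p) ^ (n - j)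
      ≤ (n * p) ^ k / k ! * Real.exp (n * p) :=
  (sum_le_sum fun j _ => choose_mul_pow_mul_pow_le hp₀ hp₁ n j).trans
    (sum_Icc_pow_div_factorial_le (by positivity) k n)

theorem binomial_tail_le_exp_div_factorial_general (n k : ℕ) :
    ∑ j ∈ Finset.Icc k n,
        (n.choose j : ℝ) * (1 / n) ^ j * (1 - 1 / n) ^ (n - j)
      ≤ Real.exp 1 / k.factorial := by
  have hmean : (n : ℝ) * (1 / n) ≤ 1 := by
    rw [one_div]
    exact mul_inv_le_one
  have hp₁ : 1 / (n : ℝ) ≤ 1 := by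
    rw [one_div]
    exact cast_inv_le_one n
  calc ∑ j ∈ Icc k n, (n.choose j : ℝ) * (1 / n) ^ j * (1 - 1 / n) ^ (n - j)
      ≤ (n * (1 / n)) ^ k / k ! * Real.exp (n * (1 / n)) :=
        sum_Icc_choose_mul_pow_mul_pow_le (by positivity) hp₁ k n
    _ ≤ 1 / k ! * Real.exp 1 := by
        gcongr
        exact pow_le_one₀ (by positivity) hmean
    _ = Real.exp 1 / k ! := by ring

/-- Binomial tail bound: for `Y ~ Bin(n, 1/n)` and `k ≤ n`, `P(Y ≥ k) ≤ e / k!`. -/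
theorem binomial_tail_le_exp_div_factorial (n k : ℕ) (hn : 1 ≤ n) (hk : k ≤ n) :
    ∑ j ∈ Finset.Icc k n,
        (n.choose j : ℝ) * (1 / n) ^ j * (1 - 1 / n) ^ (n - j)
      ≤ Real.exp 1 / k.factorial :=
  binomial_tail_le_exp_div_factorial_general n k
end

section
/- Let (q_k)_{k≥0} be a sequence of reals in [0,1] satisfying q_0 ≤ exp(-c'_0) and q_k ≤ m_k^2 · q_{k-1}^2 for k ≥ 1, where m_k ≤ (90(k+N_0))^{6d}. If c'_0 - Σ_{j=1}^{∞} ln((90(j+N_0))^{12d})/2^j ≥ 1, then q_k ≤ exp(-2^k) for all k ≥ 0. -/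
/-!
Writing `q k ≤ exp (-2^k a_k)`, the recursion `q (k+1) ≤ b_k q_k^2` is preserved with
`a_{k+1} = a_k - log b_k / 2^(k+1)`, since squaring doubles the exponent and the factor `b_k`
only adds `log b_k`. So `a_k` is `c'_0` minus a partial sum of `∑ log b_j / 2^(j+1)`, a series
that converges because `b_j` grows only polynomially; the hypothesis keeps every `a_k ≥ 1`.
-/

open Real Finset

theorem le_exp_neg_two_pow_mul_of_le_mul_sq {q b : ℕ → ℝ} {c : ℝ} (hq : ∀ k, 0 ≤ q k)
    (hb : ∀ k, 0 < b k) (h0 : q 0 ≤ exp (-c)) (hrec : ∀ k, q (k + 1) ≤ b k * q k ^ 2) (k : ℕ) :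
    q k ≤ exp (-2 ^ k * (c - ∑ j ∈ range k, log (b j) / 2 ^ (j + 1))) := by
  induction k with
  | zero => simpa using h0
  | succ k ih =>
    calc q (k + 1) ≤ b k * q k ^ 2 := hrec k
      _ ≤ exp (log (b k)) * exp (-2 ^ k * (c - ∑ j ∈ range k, log (b j) / 2 ^ (j + 1))) ^ 2 := by
        rw [exp_log (hb k)]
        gcongr
        exacts [(hb k).le, hq k]
      _ = exp (-2 ^ (k + 1) * (c - ∑ j ∈ range (k + 1), log (b j) / 2 ^ (j + 1))) := by
        rw [← exp_nat_mul, ← exp_add, sum_range_succ]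
        congr 1
        field_simp
        ring

theorem le_exp_neg_two_pow_of_le_mul_sq {q b : ℕ → ℝ} {c : ℝ} (hq : ∀ k, 0 ≤ q k)
    (hb : ∀ k, 1 ≤ b k) (h0 : q 0 ≤ exp (-c)) (hrec : ∀ k, q (k + 1) ≤ b k * q k ^ 2)
    (hsum : Summable fun j => log (b j) / 2 ^ (j + 1))
    (hc : 1 ≤ c - ∑' j, log (b j) / 2 ^ (j + 1)) (k : ℕ) :
    q k ≤ exp (-2 ^ k) := by
  have hpartial : ∑ j ∈ range k, log (b j) / 2 ^ (j + 1) ≤ ∑' j, log (b j) / 2 ^ (j + 1) :=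
    hsum.sum_le_tsum _ fun j _ => div_nonneg (log_nonneg (hb j)) (by positivity)
  calc q k ≤ exp (-2 ^ k * (c - ∑ j ∈ range k, log (b j) / 2 ^ (j + 1))) :=
        le_exp_neg_two_pow_mul_of_le_mul_sq hq (fun k => one_pos.trans_le (hb k)) h0 hrec k
    _ ≤ exp (-2 ^ k) := by
        gcongr
        nlinarith [pow_pos (two_pos (α := ℝ)) k]

theorem summable_log_pow_div_two_pow {x : ℕ → ℝ} {C : ℝ} (hx : ∀ j, 1 ≤ x j)
    (hxC : ∀ j, x j ≤ C * (j + 1)) (n : ℕ) :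
    Summable fun j => log (x j ^ n) / 2 ^ (j + 1) := by
  have hgeom : Summable fun j : ℕ => ((j : ℝ) + 1) / 2 ^ (j + 1) := by
    have h : Summable fun j : ℕ => (j : ℝ) / 2 ^ j :=
      (summable_pow_mul_geometric_of_norm_lt_one (R := ℝ) 1 (r := 1 / 2) (by norm_num)).congr
        fun j => by simp [div_eq_mul_inv]
    simpa using (summable_nat_add_iff 1).mpr h
  refine .of_nonneg_of_le (fun j => div_nonneg (log_nonneg (one_le_pow₀ (hx j))) (by positivity))
    (fun j => ?_) (hgeom.mul_left (n * C))
  rw [log_pow, ← mul_div_assoc]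
  gcongr ?_ / _
  calc n * log (x j) ≤ n * x j := by gcongr; exact log_le_self (zero_le_one.trans (hx j))
    _ ≤ n * (C * (j + 1)) := by gcongr; exact hxC j
    _ = n * C * (j + 1) := by ring

theorem doubly_exponential_decay_general (N0 d : ℕ)
    (c0' : ℝ) (q m : ℕ → ℝ)
    (hq : ∀ k, q k ∈ Set.Icc (0 : ℝ) 1)
    (hm0 : ∀ k, 0 ≤ m k)
    (hm : ∀ k, 1 ≤ k → m k ≤ ((90 : ℝ) * ((k : ℝ) + N0)) ^ (6 * d))
    (hq0 : q 0 ≤ Real.exp (-c0'))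
    (hrec : ∀ k, 1 ≤ k → q k ≤ (m k) ^ 2 * (q (k - 1)) ^ 2)
    (hsum : 1 ≤ c0' -
      ∑' j : ℕ, Real.log (((90 : ℝ) * (((j : ℝ) + 1) + N0)) ^ (12 * d)) / 2 ^ (j + 1)) :
    ∀ k, q k ≤ Real.exp (-(2 : ℝ) ^ k) := by
  have hx : ∀ j : ℕ, 1 ≤ (90 : ℝ) * (((j : ℝ) + 1) + N0) := fun j => by
    nlinarith [(Nat.cast_nonneg j : (0 : ℝ) ≤ j), (Nat.cast_nonneg N0 : (0 : ℝ) ≤ N0)]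
  have hxC : ∀ j : ℕ, (90 : ℝ) * (((j : ℝ) + 1) + N0) ≤ 90 * (1 + N0) * (j + 1) := fun j => by
    nlinarith [(Nat.cast_nonneg j : (0 : ℝ) ≤ j), (Nat.cast_nonneg N0 : (0 : ℝ) ≤ N0)]
  have hstep : ∀ k, q (k + 1) ≤ ((90 : ℝ) * (((k : ℝ) + 1) + N0)) ^ (12 * d) * q k ^ 2 := by
    intro k
    have hmk : m (k + 1) ≤ ((90 : ℝ) * (((k : ℝ) + 1) + N0)) ^ (6 * d) := by
      simpa using hm (k + 1) (Nat.le_add_left 1 k)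
    calc q (k + 1) ≤ m (k + 1) ^ 2 * q k ^ 2 := hrec (k + 1) (Nat.le_add_left 1 k)
      _ ≤ (((90 : ℝ) * (((k : ℝ) + 1) + N0)) ^ (6 * d)) ^ 2 * q k ^ 2 := by gcongr; exact hm0 _
      _ = _ := by ring
  exact le_exp_neg_two_pow_of_le_mul_sq (fun k => (hq k).1) (fun j => one_le_pow₀ (hx j)) hq0
    hstep (summable_log_pow_div_two_pow hx hxC _) hsum

/-- If `q_0 ≤ exp(-c'_0)`, `q_k ≤ m_k^2 q_{k-1}^2` with `m_k ≤ (90(k+N_0))^{6d}`,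
and `c'_0 - Σ_{j≥1} ln((90(j+N_0))^{12d})/2^j ≥ 1`, then `q_k ≤ exp(-2^k)` for all `k`. -/
theorem doubly_exponential_decay (N0 d : ℕ) (hN0 : 0 < N0) (hd : 1 ≤ d)
    (c0' : ℝ) (hc0 : 0 < c0') (q m : ℕ → ℝ)
    (hq : ∀ k, q k ∈ Set.Icc (0 : ℝ) 1)
    (hm0 : ∀ k, 0 ≤ m k)
    (hm : ∀ k, 1 ≤ k → m k ≤ ((90 : ℝ) * ((k : ℝ) + N0)) ^ (6 * d))
    (hq0 : q 0 ≤ Real.exp (-c0'))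
    (hrec : ∀ k, 1 ≤ k → q k ≤ (m k) ^ 2 * (q (k - 1)) ^ 2)
    (hsum : 1 ≤ c0' -
      ∑' j : ℕ, Real.log (((90 : ℝ) * (((j : ℝ) + 1) + N0)) ^ (12 * d)) / 2 ^ (j + 1)) :
    ∀ k, q k ≤ Real.exp (-(2 : ℝ) ^ k) :=
  doubly_exponential_decay_general N0 d c0' q m hq hm0 hm hq0 hrec hsum
end
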